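/- Let (p_k, q_k), k ∈ ℕ, be the integers determined by p_k + q_k·√10 = (3 + √10)^(k+1). Then for every even k ≥ 2 and every integer h ≥ 0 one has (10·h·q_k)·(10·h·q_k + 3) − 10·(h·p_k)·(h·p_k + 1) = 10·h·(h − q_{k−1}). In particular this quantity is negative for 0 < h < q_{k−1} and equals 0 for h = q_{k−1}. -/
import Mathlib

unseal Nat.sqrt.iter in
lemma irr10 : Irrational (Real.sqrt 10) := by
  rw [show (10:ℝ) = ((10:ℕ):ℝ) by norm_num, irrational_sqrt_natCast_iff]
  decide

lemma uniq {a b c d : ℤ} (h : (a:ℝ) + b * Real.sqrt 10 = c + d * Real.sqrt 10) :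
    a = c ∧ b = d := by
  by_cases hbd : b = d
  · subst hbd
    constructor
    · exact_mod_cast add_right_cancel h
    · rfl
  · exfalso
    apply irr10.ne_rat (((a - c) / (d - b) : ℚ))
    have hdb : ((d:ℝ) - b) ≠ 0 := by
      intro h0
      apply hbd
      have : (b:ℝ) = d := by linarith
      exact_mod_cast this
    push_cast
    field_simp
    linarith [h]

/-- Let `(p k, q k)` be determined by `p k + q k·√10 = (3 + √10)^(k+1)`. Then for every
even `k ≥ 2` and every integer `h ≥ 0` one has
`(10·h·q k)·(10·h·q k + 3) − 10·(h·p k)·(h·p k + 1) = 10·h·(h − q (k−1))`. In particular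
this quantity is negative for `0 < h < q (k−1)` and equals `0` for `h = q (k−1)`. -/
theorem stmt_14 (p q : ℕ → ℤ)
    (hpq : ∀ k : ℕ,
      (p k : ℝ) + (q k : ℝ) * Real.sqrt 10 = (3 + Real.sqrt 10) ^ (k + 1)) :
    ∀ k : ℕ, Even k → 2 ≤ k → ∀ h : ℤ, 0 ≤ h →
      (10 * h * q k) * (10 * h * q k + 3) - 10 * ((h * p k) * (h * p k + 1))
        = 10 * h * (h - q (k - 1)) ∧
      (0 < h → h < q (k - 1) →
        (10 * h * q k) * (10 * h * q k + 3) - 10 * ((h * p k) * (h * p k + 1)) < 0) ∧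
      (h = q (k - 1) →
        (10 * h * q k) * (10 * h * q k + 3) - 10 * ((h * p k) * (h * p k + 1)) = 0) := by
  have hsq : Real.sqrt 10 * Real.sqrt 10 = 10 := Real.mul_self_sqrt (by norm_num)
  have h0 : p 0 = 3 ∧ q 0 = 1 := by
    have := hpq 0
    have h' : ((p 0 : ℤ) : ℝ) + ((q 0 : ℤ) : ℝ) * Real.sqrt 10
        = ((3:ℤ):ℝ) + ((1:ℤ):ℝ) * Real.sqrt 10 := by
      push_cast
      rw [this]; ring
    exact uniq h'
  have hrec : ∀ k : ℕ, p (k + 1) = 3 * p k + 10 * q k ∧ q (k + 1) = p k + 3 * q k := by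
    intro k
    have h1 := hpq k
    have h2 := hpq (k + 1)
    have h' : ((p (k+1) : ℤ) : ℝ) + ((q (k+1) : ℤ) : ℝ) * Real.sqrt 10
        = ((3 * p k + 10 * q k : ℤ) : ℝ) + ((p k + 3 * q k : ℤ) : ℝ) * Real.sqrt 10 := by
      push_cast
      rw [h2, pow_succ, ← h1]
      ring_nf
      rw [Real.sq_sqrt (by norm_num : (0:ℝ) ≤ 10)]
      ring
    exact uniq h'
  have hnorm : ∀ k : ℕ, p k ^ 2 - 10 * q k ^ 2 = (-1) ^ (k + 1) := by
    intro k
    induction k with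
    | zero => rw [h0.1, h0.2]; norm_num
    | succ n ih =>
      rw [(hrec n).1, (hrec n).2]
      ring_nf
      ring_nf at ih
      linarith
  intro k hk hk2 h hh
  obtain ⟨m, hm⟩ : ∃ m, k = m + 1 := ⟨k - 1, by omega⟩
  have hk1 : k - 1 = m := by omega
  have hq3p : 3 * q k - p k = - q m := by
    rw [hm, (hrec m).1, (hrec m).2]; ring
  have hn : 10 * q k ^ 2 - p k ^ 2 = 1 := by
    have hneg : ((-1:ℤ)) ^ (k + 1) = -1 := by
      rw [pow_succ, hk.neg_one_pow]; ring
    have := hnorm k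
    rw [hneg] at this
    linarith
  have key : (10 * h * q k) * (10 * h * q k + 3) - 10 * ((h * p k) * (h * p k + 1))
      = 10 * h * (h - q (k - 1)) := by
    rw [hk1]
    have expand : (10 * h * q k) * (10 * h * q k + 3) - 10 * ((h * p k) * (h * p k + 1))
        = 10 * h ^ 2 * (10 * q k ^ 2 - p k ^ 2) + 10 * h * (3 * q k - p k) := by ring
    rw [expand, hn, hq3p]
    ring
  refine ⟨key, ?_, ?_⟩
  · intro hpos hlt
    rw [key]
    apply mul_neg_of_pos_of_neg
    · positivity
    · omega
  · intro heq
    rw [key, heq]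
    ring
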